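/- Let n ≥ 2, let A : ℝⁿ → ℝⁿ be C¹ with compact support, let ξ ∈ ℝⁿ \ {0}, let η, y ∈ ℝⁿ be unit vectors with η·ξ = 0 and y·η = 0, and let χ ∈ C_c^∞(ℝⁿ) with χ ≥ 0, supp χ ⊆ {|x| ≤ 1}, ∫_{ℝⁿ} χ = 1, and χ_δ(x) = δ^{−n} χ(x/δ) for δ > 0. For τ > |ξ| + 1 set δ_τ = τ^{−1/3}, B_τ = √(1 − |ξ|²/(4τ²)), η₂(τ) = B_τ η + ξ/(2τ), ω(τ) = B_τ ξ − (|ξ|²/(2τ)) η, A_♯^τ = χ_{δ_τ} * A (componentwise convolution), and define b₂^τ(x) = ( −i ω(τ)·y − i ∫_ℝ D_y( η₂(τ)·A_♯^τ )(x + s η₂(τ)) ds ) exp( −i ∫_ℝ η₂(τ)·A_♯^τ(x + s η₂(τ)) ds ), where D_y denotes the directional derivative along y. Then for every x ∈ ℝⁿ, b₂^τ(x) converges as τ → +∞ to b(x) := ( −i ξ·y − i ∫_ℝ D_y( η·A )(x + sη) ds ) exp( −i ∫_ℝ η·A(x + sη) ds ). -/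

import Mathlib

open MeasureTheory Complex Filter Function
open scoped RealInnerProductSpace Topology Convolution

noncomputable section

/-- The rescaled mollifier `χ_δ(x) = δ^{-n} χ(x/δ)`. -/
def mollifierRescale (n : ℕ) (χ : EuclideanSpace ℝ (Fin n) → ℝ) (δ : ℝ)
    (x : EuclideanSpace ℝ (Fin n)) : ℝ :=
  δ ^ (-(n : ℤ)) * χ (δ⁻¹ • x)

/-- The mollified vector field `χ_δ * A` (componentwise convolution). -/
def mollifiedField (n : ℕ) (χ : EuclideanSpace ℝ (Fin n) → ℝ) (δ : ℝ)
    (A : EuclideanSpace ℝ (Fin n) → EuclideanSpace ℝ (Fin n))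
    (x : EuclideanSpace ℝ (Fin n)) : EuclideanSpace ℝ (Fin n) :=
  ∫ z : EuclideanSpace ℝ (Fin n), mollifierRescale n χ δ (x - z) • A z

/-- The amplitude `b₂^τ` of the geometric optics ansatz: with `δ_τ = τ^{-1/3}`,
`B_τ = √(1-|ξ|²/(4τ²))`, `η₂(τ) = B_τ η + ξ/(2τ)`, `ω(τ) = B_τ ξ - (|ξ|²/(2τ)) η`,
`A_♯^τ = χ_{δ_τ} * A`,
`b₂^τ(x) = (-i ω·y - i ∫_ℝ D_y(η₂·A_♯^τ)(x+sη₂) ds) exp(-i ∫_ℝ η₂·A_♯^τ(x+sη₂) ds)`. -/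
def ansatzAmplitude (n : ℕ) (χ : EuclideanSpace ℝ (Fin n) → ℝ)
    (A : EuclideanSpace ℝ (Fin n) → EuclideanSpace ℝ (Fin n))
    (ξ η y : EuclideanSpace ℝ (Fin n)) (τ : ℝ)
    (x : EuclideanSpace ℝ (Fin n)) : ℂ :=
  let δ : ℝ := τ ^ (-(1 / 3 : ℝ))
  let B : ℝ := Real.sqrt (1 - ‖ξ‖ ^ 2 / (4 * τ ^ 2))
  let η₂ : EuclideanSpace ℝ (Fin n) := B • η + (2 * τ)⁻¹ • ξ
  let ω : EuclideanSpace ℝ (Fin n) := B • ξ - (‖ξ‖ ^ 2 / (2 * τ)) • η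
  (-Complex.I * ((⟪ω, y⟫ : ℝ) : ℂ)
      - Complex.I * ((∫ s : ℝ,
          fderiv ℝ (fun z => (⟪η₂, mollifiedField n χ δ A z⟫ : ℝ)) (x + s • η₂) y : ℝ) : ℂ))
    * Complex.exp (-Complex.I *
        ((∫ s : ℝ, ⟪η₂, mollifiedField n χ δ A (x + s • η₂)⟫ : ℝ) : ℂ))

section aux

variable {n : ℕ} {χ : EuclideanSpace ℝ (Fin n) → ℝ} {δ : ℝ}

local notation "G" => EuclideanSpace ℝ (Fin n)

lemma moll_cont (hχ : Continuous χ) : Continuous (mollifierRescale n χ δ) :=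
  continuous_const.mul (hχ.comp (continuous_const_smul _))

lemma moll_nonneg (hχ0 : ∀ x, 0 ≤ χ x) (hδ : 0 < δ) (x : G) :
    0 ≤ mollifierRescale n χ δ x :=
  mul_nonneg (by positivity) (hχ0 _)

lemma moll_supp (hχsupp : support χ ⊆ Metric.closedBall 0 1) (hδ : 0 < δ) :
    support (mollifierRescale n χ δ) ⊆ Metric.closedBall 0 δ := by
  intro x hx
  have hx' : χ (δ⁻¹ • x) ≠ 0 := by
    intro h
    apply hx
    simp [mollifierRescale, h]
  have h1 := hχsupp hx'
  simp only [Metric.mem_closedBall, dist_zero_right] at h1 ⊢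
  rw [norm_smul, norm_inv, Real.norm_of_nonneg hδ.le] at h1
  calc ‖x‖ = δ * (δ⁻¹ * ‖x‖) := by field_simp
  _ ≤ δ * 1 := by nlinarith
  _ = δ := mul_one δ

lemma moll_hcs (hχsupp : support χ ⊆ Metric.closedBall 0 1) (hδ : 0 < δ) :
    HasCompactSupport (mollifierRescale n χ δ) := by
  apply HasCompactSupport.intro (isCompact_closedBall (0 : G) δ)
  intro x hx
  by_contra h
  exact hx (moll_supp hχsupp hδ h)

lemma moll_integral (hχ : Continuous χ) (hχint : (∫ x : G, χ x) = 1) (hδ : 0 < δ) :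
    (∫ x : G, mollifierRescale n χ δ x) = 1 := by
  simp only [mollifierRescale]
  rw [integral_const_mul]
  have h1 : (∫ x : G, χ (δ⁻¹ • x)) = |((δ⁻¹) ^ Module.finrank ℝ G)⁻¹| • ∫ x : G, χ x :=
    MeasureTheory.Measure.integral_comp_smul volume χ δ⁻¹
  rw [finrank_euclideanSpace_fin] at h1
  rw [h1, hχint, smul_eq_mul, mul_one, inv_pow, inv_inv, abs_of_pos (pow_pos hδ n),
    zpow_neg, zpow_natCast]
  exact inv_mul_cancel₀ (pow_ne_zero n hδ.ne')

end aux

section aux2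

variable {n : ℕ} {χ : EuclideanSpace ℝ (Fin n) → ℝ} {δ : ℝ}

local notation "G" => EuclideanSpace ℝ (Fin n)

lemma mollifiedField_eq (χ : G → ℝ) (δ : ℝ) (A : G → G) :
    mollifiedField n χ δ A
      = mollifierRescale n χ δ ⋆[ContinuousLinearMap.lsmul ℝ ℝ, volume] A :=
  funext fun _ => convolution_lsmul_swap.symm

lemma conv_norm_le {f : G → ℝ} {g : G → G} (hf0 : ∀ x, 0 ≤ f x)
    (hfc : Continuous f) (hfs : HasCompactSupport f) (hfint : (∫ x : G, f x) = 1)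
    (hgc : Continuous g) (hgs : HasCompactSupport g)
    {C : ℝ} (hg : ∀ t, ‖g t‖ ≤ C) (x : G) :
    ‖(f ⋆[ContinuousLinearMap.lsmul ℝ ℝ, volume] g) x‖ ≤ C := by
  have hfi : Integrable f := hfc.integrable_of_hasCompactSupport hfs
  have hce := hgs.convolutionExists_right (ContinuousLinearMap.lsmul ℝ ℝ)
    hfi.locallyIntegrable hgc x
  rw [convolution_def]
  refine (norm_integral_le_integral_norm _).trans ?_
  have hpt : ∀ t : G, ‖(ContinuousLinearMap.lsmul ℝ ℝ) (f t) (g (x - t))‖ ≤ f t * C := by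
    intro t
    rw [ContinuousLinearMap.lsmul_apply, norm_smul, Real.norm_of_nonneg (hf0 t)]
    exact mul_le_mul_of_nonneg_left (hg _) (hf0 t)
  refine (integral_mono hce.norm (hfi.mul_const C) hpt).trans ?_
  rw [integral_mul_const, hfint, one_mul]

lemma conv_supp {f : G → ℝ} {g : G → G} {R : ℝ}
    (hf : support f ⊆ Metric.closedBall 0 δ) (hg : support g ⊆ Metric.closedBall 0 R) :
    support (f ⋆[ContinuousLinearMap.lsmul ℝ ℝ, volume] g)
      ⊆ Metric.closedBall 0 (δ + R) := by
  refine (support_convolution_subset _).trans ?_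
  rintro z ⟨u, hu, v, hv, rfl⟩
  have h1 := hf hu
  have h2 := hg hv
  simp only [Metric.mem_closedBall, dist_zero_right] at h1 h2 ⊢
  exact (norm_add_le u v).trans (add_le_add h1 h2)

end aux2


section aux3

variable {n : ℕ} {χ : EuclideanSpace ℝ (Fin n) → ℝ}

local notation "G" => EuclideanSpace ℝ (Fin n)

/-- Key lemma: convergence of `∫ s, ⟪v τ, (χ_{δ(τ)} ⋆ g)(x + s • v τ)⟫` to
`∫ s, ⟪η, g (x + s • η)⟫` as `τ → ∞`. -/
lemma key_tendsto (hχsm : Continuous χ) (hχc : HasCompactSupport χ) (hχ0 : ∀ x, 0 ≤ χ x)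
    (hχsupp : support χ ⊆ Metric.closedBall 0 1) (hχint : (∫ x : G, χ x) = 1)
    {g : G → G} (hgc : Continuous g) (hgs : HasCompactSupport g)
    (x ηl : G) (v : ℝ → G) (hv : Tendsto v atTop (𝓝 ηl))
    (hv1 : ∀ᶠ τ in atTop, ‖v τ‖ = 1) :
    Tendsto (fun τ : ℝ => ∫ s : ℝ,
        (⟪v τ, (mollifierRescale n χ (τ ^ (-(1/3 : ℝ))) ⋆[ContinuousLinearMap.lsmul ℝ ℝ,
          volume] g) (x + s • v τ)⟫ : ℝ))
      atTop (𝓝 (∫ s : ℝ, (⟪ηl, g (x + s • ηl)⟫ : ℝ))) := by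
  -- bound on g
  obtain ⟨C, hC'⟩ := hgc.norm.bounded_above_of_compact_support hgs.norm
  have hC : ∀ t : G, ‖g t‖ ≤ C := fun t => by simpa using hC' t
  have hC0 : (0 : ℝ) ≤ C := le_trans (norm_nonneg _) (hC 0)
  -- support radius for g
  obtain ⟨R, hR⟩ := hgs.isBounded.subset_closedBall (0 : G)
  have hδpos : ∀ {τ : ℝ}, 1 ≤ τ → 0 < τ ^ (-(1/3 : ℝ)) :=
    fun hτ => Real.rpow_pos_of_pos (lt_of_lt_of_le one_pos hτ) _
  have hδle : ∀ {τ : ℝ}, 1 ≤ τ → τ ^ (-(1/3 : ℝ)) ≤ 1 :=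
    fun hτ => Real.rpow_le_one_of_one_le_of_nonpos hτ (by norm_num)
  have hδ0 : Tendsto (fun τ : ℝ => τ ^ (-(1/3 : ℝ))) atTop (𝓝 0) :=
    tendsto_rpow_neg_atTop (by norm_num)
  set M : ℝ := |R| + 1 + ‖x‖ with hM
  have hRM : R ≤ |R| := le_abs_self R
  apply tendsto_integral_filter_of_dominated_convergence
    (Set.indicator (Metric.closedBall (0 : ℝ) M) fun _ => C)
  · -- measurability
    filter_upwards [eventually_ge_atTop (1 : ℝ)] with τ hτ
    have hcont : Continuous fun s : ℝ =>
        (⟪v τ, (mollifierRescale n χ (τ ^ (-(1/3 : ℝ))) ⋆[ContinuousLinearMap.lsmul ℝ ℝ,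
          volume] g) (x + s • v τ)⟫ : ℝ) := by
      have hconv : Continuous ((mollifierRescale n χ (τ ^ (-(1/3 : ℝ)))) ⋆[ContinuousLinearMap.lsmul ℝ ℝ, volume] g) :=
        hgs.continuous_convolution_right _
          ((moll_cont hχsm).integrable_of_hasCompactSupport
            (moll_hcs hχsupp (hδpos hτ))).locallyIntegrable hgc
      exact continuous_const.inner
        (hconv.comp (continuous_const.add (continuous_id.smul continuous_const)))
    exact hcont.aestronglyMeasurable
  · -- domination
    filter_upwards [eventually_ge_atTop (1 : ℝ), hv1] with τ hτ hvτ
    refine Eventually.of_forall fun s => ?_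
    by_cases hs : s ∈ Metric.closedBall (0 : ℝ) M
    · rw [Set.indicator_of_mem hs]
      refine (abs_real_inner_le_norm _ _).trans ?_
      rw [hvτ, one_mul]
      exact conv_norm_le (moll_nonneg hχ0 (hδpos hτ)) (moll_cont hχsm)
        (moll_hcs hχsupp (hδpos hτ)) (moll_integral hχsm hχint (hδpos hτ)) hgc hgs hC _
    · rw [Set.indicator_of_notMem hs]
      have hz : (mollifierRescale n χ (τ ^ (-(1/3 : ℝ))) ⋆[ContinuousLinearMap.lsmul ℝ ℝ,
          volume] g) (x + s • v τ) = 0 := by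
        by_contra h
        have hmem := conv_supp (moll_supp hχsupp (hδpos hτ)) (fun t ht => hR (subset_tsupport g ht)) h
        simp only [Metric.mem_closedBall, dist_zero_right] at hmem
        have h2 : ‖s • v τ‖ = |s| := by rw [norm_smul, hvτ, mul_one]; rfl
        have h1 : |s| ≤ ‖x + s • v τ‖ + ‖x‖ := by
          have h3 := norm_sub_le (x + s • v τ) x
          rw [add_sub_cancel_left, h2] at h3
          exact h3
        simp only [Metric.mem_closedBall, dist_zero_right, not_le, Real.dist_eq, sub_zero, Real.norm_eq_abs] at hs
        have hd1 : τ ^ (-(1/3 : ℝ)) + R ≤ 1 + |R| := add_le_add (hδle hτ) hRM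
        linarith [hmem, h1, hs]
      rw [hz]
      simp [inner_zero_right]
  · -- integrability of the bound
    rw [integrable_indicator_iff measurableSet_closedBall]
    exact integrableOn_const (measure_closedBall_lt_top).ne
  · -- pointwise convergence
    refine Eventually.of_forall fun s => ?_
    have hk : Tendsto (fun τ => x + s • v τ) atTop (𝓝 (x + s • ηl)) :=
      tendsto_const_nhds.add (hv.const_smul s)
    have hconv : Tendsto (fun τ : ℝ =>
        (mollifierRescale n χ (τ ^ (-(1/3 : ℝ))) ⋆[ContinuousLinearMap.lsmul ℝ ℝ,
          volume] g) (x + s • v τ)) atTop (𝓝 (g (x + s • ηl))) := by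
      apply convolution_tendsto_right
      · filter_upwards [eventually_ge_atTop (1 : ℝ)] with τ hτ
        exact moll_nonneg hχ0 (hδpos hτ)
      · filter_upwards [eventually_ge_atTop (1 : ℝ)] with τ hτ
        exact moll_integral hχsm hχint (hδpos hτ)
      · rw [tendsto_smallSets_iff]
        intro U hU
        obtain ⟨ε, hε, hball⟩ := Metric.mem_nhds_iff.1 hU
        filter_upwards [eventually_ge_atTop (1 : ℝ), hδ0.eventually (eventually_lt_nhds hε)]
          with τ hτ hδτ
        refine (moll_supp hχsupp (hδpos hτ)).trans ?_
        refine subset_trans ?_ hball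
        intro z hz
        simp only [Metric.mem_closedBall, dist_zero_right] at hz
        exact Metric.mem_ball.2 (lt_of_le_of_lt (by simpa [Real.dist_eq] using hz) hδτ)
      · exact Eventually.of_forall fun _ => hgc.aestronglyMeasurable
      · exact (hgc.tendsto _).comp tendsto_snd
      · exact hk
    exact hv.inner hconv

end aux3


section aux4

variable {n : ℕ} {χ : EuclideanSpace ℝ (Fin n) → ℝ}

local notation "G" => EuclideanSpace ℝ (Fin n)

lemma fderiv_inner_limit {A : G → G} (hA : ContDiff ℝ 1 A) (c p y : G) :
    fderiv ℝ (fun z => (⟪c, A z⟫ : ℝ)) p y = ⟪c, fderiv ℝ A p y⟫ := by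
  have h2 : HasFDerivAt (fun z => (⟪c, A z⟫ : ℝ)) ((innerSL ℝ c).comp (fderiv ℝ A p)) p :=
    (innerSL ℝ c).hasFDerivAt.comp p (hA.differentiable one_ne_zero p).hasFDerivAt
  rw [h2.fderiv]
  rfl

lemma fderiv_inner_mollified (hχsm : Continuous χ)
    (hχsupp : support χ ⊆ Metric.closedBall 0 1)
    {A : G → G} (hA : ContDiff ℝ 1 A) (hAc : HasCompactSupport A) {δ : ℝ} (hδ : 0 < δ)
    (c p y : G) :
    fderiv ℝ (fun z => (⟪c, mollifiedField n χ δ A z⟫ : ℝ)) p y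
      = ⟪c, (mollifierRescale n χ δ ⋆[ContinuousLinearMap.lsmul ℝ ℝ, volume]
          (fun t => fderiv ℝ A t y)) p⟫ := by
  have hloc : LocallyIntegrable (mollifierRescale n χ δ) volume :=
    ((moll_cont hχsm).integrable_of_hasCompactSupport (moll_hcs hχsupp hδ)).locallyIntegrable
  have hF : HasFDerivAt (mollifiedField n χ δ A)
      ((mollifierRescale n χ δ ⋆[(ContinuousLinearMap.lsmul ℝ ℝ).precompR G, volume]
        fderiv ℝ A) p) p := by
    rw [mollifiedField_eq]
    exact hAc.hasFDerivAt_convolution_right _ hloc hA p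
  have h2 : HasFDerivAt (fun z => (⟪c, mollifiedField n χ δ A z⟫ : ℝ))
      ((innerSL ℝ c).comp ((mollifierRescale n χ δ ⋆[(ContinuousLinearMap.lsmul ℝ ℝ).precompR G,
        volume] fderiv ℝ A) p)) p :=
    (innerSL ℝ c).hasFDerivAt.comp p hF
  rw [h2.fderiv, ContinuousLinearMap.comp_apply, innerSL_apply_apply]
  congr 1
  exact convolution_precompR_apply _ hloc (hAc.fderiv (𝕜 := ℝ))
    (hA.continuous_fderiv one_ne_zero) p y

end aux4



/-- pointwise convergence of the amplitude `b₂^τ` to the limiting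
amplitude `b` as `τ → +∞`. -/
theorem stmt2 (n : ℕ) (hn : 2 ≤ n)
    (A : EuclideanSpace ℝ (Fin n) → EuclideanSpace ℝ (Fin n))
    (hA : ContDiff ℝ 1 A) (hAc : HasCompactSupport A)
    (ξ : EuclideanSpace ℝ (Fin n)) (hξ : ξ ≠ 0)
    (η y : EuclideanSpace ℝ (Fin n)) (hη : ‖η‖ = 1) (hy : ‖y‖ = 1)
    (hηξ : (⟪η, ξ⟫ : ℝ) = 0) (hyη : (⟪y, η⟫ : ℝ) = 0)
    (χ : EuclideanSpace ℝ (Fin n) → ℝ)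
    (hχsm : ContDiff ℝ (⊤ : ℕ∞) χ) (hχc : HasCompactSupport χ) (hχ0 : ∀ x, 0 ≤ χ x)
    (hχsupp : Function.support χ ⊆ Metric.closedBall 0 1)
    (hχint : (∫ x : EuclideanSpace ℝ (Fin n), χ x) = 1) :
    ∀ x : EuclideanSpace ℝ (Fin n),
      Tendsto (fun τ : ℝ => ansatzAmplitude n χ A ξ η y τ x) atTop
        (𝓝 ((-Complex.I * ((⟪ξ, y⟫ : ℝ) : ℂ)
            - Complex.I * ((∫ s : ℝ,
                fderiv ℝ (fun z => (⟪η, A z⟫ : ℝ)) (x + s • η) y : ℝ) : ℂ))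
          * Complex.exp (-Complex.I *
              ((∫ s : ℝ, ⟪η, A (x + s • η)⟫ : ℝ) : ℂ)))) := by
  intro x
  -- scalar limits
  have h2τ : Tendsto (fun τ : ℝ => (2 * τ)⁻¹) atTop (𝓝 0) :=
    Tendsto.inv_tendsto_atTop (tendsto_id.const_mul_atTop two_pos)
  have h4τ : Tendsto (fun τ : ℝ => 4 * τ ^ 2) atTop atTop :=
    (tendsto_pow_atTop two_ne_zero).const_mul_atTop (by norm_num)
  have hq : Tendsto (fun τ : ℝ => ‖ξ‖ ^ 2 / (4 * τ ^ 2)) atTop (𝓝 0) :=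
    Tendsto.div_atTop tendsto_const_nhds h4τ
  have hq2 : Tendsto (fun τ : ℝ => ‖ξ‖ ^ 2 / (2 * τ)) atTop (𝓝 0) :=
    Tendsto.div_atTop tendsto_const_nhds (tendsto_id.const_mul_atTop two_pos)
  have hB : Tendsto (fun τ : ℝ => Real.sqrt (1 - ‖ξ‖ ^ 2 / (4 * τ ^ 2))) atTop (𝓝 1) := by
    have h1 : Tendsto (fun τ : ℝ => 1 - ‖ξ‖ ^ 2 / (4 * τ ^ 2)) atTop (𝓝 1) := by
      simpa using tendsto_const_nhds.sub hq
    have := (Real.continuous_sqrt.tendsto (1 : ℝ)).comp h1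
    simpa [Function.comp_def] using this
  have hη₂ : Tendsto (fun τ : ℝ =>
      Real.sqrt (1 - ‖ξ‖ ^ 2 / (4 * τ ^ 2)) • η + (2 * τ)⁻¹ • ξ) atTop (𝓝 η) := by
    have := (hB.smul_const η).add (h2τ.smul_const ξ)
    simpa using this
  have hω : Tendsto (fun τ : ℝ =>
      Real.sqrt (1 - ‖ξ‖ ^ 2 / (4 * τ ^ 2)) • ξ - (‖ξ‖ ^ 2 / (2 * τ)) • η) atTop (𝓝 ξ) := by
    have := (hB.smul_const ξ).sub (hq2.smul_const η)
    simpa using this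
  -- eventual unit norm of η₂
  have hη₂1 : ∀ᶠ τ : ℝ in atTop,
      ‖Real.sqrt (1 - ‖ξ‖ ^ 2 / (4 * τ ^ 2)) • η + (2 * τ)⁻¹ • ξ‖ = 1 := by
    filter_upwards [eventually_ge_atTop (max ‖ξ‖ 1)] with τ hτ
    have hτ1 : (1 : ℝ) ≤ τ := le_trans (le_max_right _ _) hτ
    have hτξ : ‖ξ‖ ≤ τ := le_trans (le_max_left _ _) hτ
    have hτ0 : (0 : ℝ) < τ := lt_of_lt_of_le one_pos hτ1
    have h4 : (0 : ℝ) < 4 * τ ^ 2 := by positivity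
    have harg : 0 ≤ 1 - ‖ξ‖ ^ 2 / (4 * τ ^ 2) := by
      rw [sub_nonneg, div_le_one h4]
      nlinarith [norm_nonneg ξ]
    have hBsq : Real.sqrt (1 - ‖ξ‖ ^ 2 / (4 * τ ^ 2)) ^ 2 = 1 - ‖ξ‖ ^ 2 / (4 * τ ^ 2) :=
      Real.sq_sqrt harg
    have hsq : ‖Real.sqrt (1 - ‖ξ‖ ^ 2 / (4 * τ ^ 2)) • η + (2 * τ)⁻¹ • ξ‖ ^ 2 = 1 := by
      rw [norm_add_sq_real, real_inner_smul_left, real_inner_smul_right, hηξ,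
        norm_smul, norm_smul, hη]
      simp only [Real.norm_eq_abs, mul_pow, _root_.sq_abs, mul_one, mul_zero]
      rw [hBsq]
      field_simp
      ring
    rw [← Real.sqrt_sq (norm_nonneg _), hsq, Real.sqrt_one]
  -- C1
  have hC1 : Tendsto (fun τ : ℝ =>
      (⟪Real.sqrt (1 - ‖ξ‖ ^ 2 / (4 * τ ^ 2)) • ξ - (‖ξ‖ ^ 2 / (2 * τ)) • η, y⟫ : ℝ))
      atTop (𝓝 (⟪ξ, y⟫ : ℝ)) := hω.inner tendsto_const_nhds
  -- C2
  have hC2 : Tendsto (fun τ : ℝ => ∫ s : ℝ,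
      (⟪Real.sqrt (1 - ‖ξ‖ ^ 2 / (4 * τ ^ 2)) • η + (2 * τ)⁻¹ • ξ,
        mollifiedField n χ (τ ^ (-(1 / 3 : ℝ))) A
          (x + s • (Real.sqrt (1 - ‖ξ‖ ^ 2 / (4 * τ ^ 2)) • η + (2 * τ)⁻¹ • ξ))⟫ : ℝ))
      atTop (𝓝 (∫ s : ℝ, (⟪η, A (x + s • η)⟫ : ℝ))) := by
    simp only [mollifiedField_eq]
    exact key_tendsto hχsm.continuous hχc hχ0 hχsupp hχint hA.continuous hAc x η _ hη₂ hη₂1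
  -- C3
  have hDAcont : Continuous (fun t => fderiv ℝ A t y) :=
    (hA.continuous_fderiv one_ne_zero).clm_apply continuous_const
  have hDAhcs : HasCompactSupport (fun t => fderiv ℝ A t y) := hAc.fderiv_apply (𝕜 := ℝ) y
  have hC3conv := key_tendsto hχsm.continuous hχc hχ0 hχsupp hχint hDAcont hDAhcs x η _ hη₂ hη₂1
  have hC3 : Tendsto (fun τ : ℝ => ∫ s : ℝ,
      fderiv ℝ (fun z => (⟪Real.sqrt (1 - ‖ξ‖ ^ 2 / (4 * τ ^ 2)) • η + (2 * τ)⁻¹ • ξ,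
          mollifiedField n χ (τ ^ (-(1 / 3 : ℝ))) A z⟫ : ℝ))
        (x + s • (Real.sqrt (1 - ‖ξ‖ ^ 2 / (4 * τ ^ 2)) • η + (2 * τ)⁻¹ • ξ)) y)
      atTop (𝓝 (∫ s : ℝ, fderiv ℝ (fun z => (⟪η, A z⟫ : ℝ)) (x + s • η) y)) := by
    have hlim : (∫ s : ℝ, fderiv ℝ (fun z => (⟪η, A z⟫ : ℝ)) (x + s • η) y)
        = ∫ s : ℝ, (⟪η, (fun t => fderiv ℝ A t y) (x + s • η)⟫ : ℝ) :=
      integral_congr_ae (Eventually.of_forall fun s => fderiv_inner_limit hA η (x + s • η) y)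
    rw [hlim]
    refine Tendsto.congr' ?_ hC3conv
    filter_upwards [eventually_ge_atTop (1 : ℝ)] with τ hτ
    refine integral_congr_ae (Eventually.of_forall fun s => ?_)
    exact (fderiv_inner_mollified hχsm.continuous hχsupp hA hAc
      (Real.rpow_pos_of_pos (lt_of_lt_of_le one_pos hτ) _) _ _ _).symm
  -- assembly
  simp only [ansatzAmplitude]
  refine Tendsto.mul (Tendsto.sub ?_ ?_) ?_
  · exact Tendsto.const_mul _ ((Complex.continuous_ofReal.tendsto _).comp hC1)
  · exact Tendsto.const_mul _ ((Complex.continuous_ofReal.tendsto _).comp hC3)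
  · exact (Complex.continuous_exp.tendsto _).comp
      (Tendsto.const_mul _ ((Complex.continuous_ofReal.tendsto _).comp hC2))


end
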